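/- Let (x,y) : ℝ → ℝ² be a differentiable solution of the arc lane-tracking vector field with gain p > 0. Then t ↦ ρ(t)² is nonincreasing, where ρ(t) = (x(t)−x_c)² + (y(t)−y_c)² − r²; indeed d/dt (ρ(t)²) = −16p·((x(t)−x_c)² + (y(t)−y_c)²)·ρ(t)² ≤ 0, so ρ² is a Lyapunov function for convergence to the target circle. -/

import Mathlib

/-! The rotational part `r cw (y - yc, -(x - xc))` of the field is tangent to every circle centred
at `(xc, yc)`, so it does not change `ρ`; only the gradient part acts, giving
`ρ' = -8 p ((x - xc)² + (y - yc)²) ρ`. Hence `(ρ²)' = 2 ρ ρ' ≤ 0`. -/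

def radialError (xc yc r x y : ℝ) : ℝ := (x - xc) ^ 2 + (y - yc) ^ 2 - r ^ 2

theorem HasDerivAt.radialError {xc yc r x' y' t : ℝ} {x y : ℝ → ℝ}
    (hx : HasDerivAt x x' t) (hy : HasDerivAt y y' t) :
    HasDerivAt (fun s => radialError xc yc r (x s) (y s))
      (2 * ((x t - xc) * x' + (y t - yc) * y')) t := by
  refine ((((hx.sub_const xc).fun_pow 2).add ((hy.sub_const yc).fun_pow 2)).sub_const
    (r ^ 2)).congr_deriv ?_
  push_cast
  ring

theorem hasDerivAt_radialError_of_arcField {xc yc r cw p t : ℝ} {x y : ℝ → ℝ}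
    (hx : HasDerivAt x
      (r * (y t - yc) * cw - 4 * p * (x t - xc) * radialError xc yc r (x t) (y t)) t)
    (hy : HasDerivAt y
      (-(r * (x t - xc) * cw) - 4 * p * (y t - yc) * radialError xc yc r (x t) (y t)) t) :
    HasDerivAt (fun s => radialError xc yc r (x s) (y s))
      (-8 * p * ((x t - xc) ^ 2 + (y t - yc) ^ 2) * radialError xc yc r (x t) (y t)) t := by
  refine (hx.radialError hy).congr_deriv ?_
  ring

theorem hasDerivAt_sq_radialError_of_arcField {xc yc r cw p t : ℝ} {x y : ℝ → ℝ}
    (hx : HasDerivAt x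
      (r * (y t - yc) * cw - 4 * p * (x t - xc) * radialError xc yc r (x t) (y t)) t)
    (hy : HasDerivAt y
      (-(r * (x t - xc) * cw) - 4 * p * (y t - yc) * radialError xc yc r (x t) (y t)) t) :
    HasDerivAt (fun s => radialError xc yc r (x s) (y s) ^ 2)
      (-16 * p * ((x t - xc) ^ 2 + (y t - yc) ^ 2) * radialError xc yc r (x t) (y t) ^ 2) t := by
  refine ((hasDerivAt_radialError_of_arcField hx hy).fun_pow 2).congr_deriv ?_
  push_cast
  ring

theorem neg_mul_sum_sq_mul_sq_nonpos {p : ℝ} (hp : 0 ≤ p) (u v ρ : ℝ) :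
    -16 * p * (u ^ 2 + v ^ 2) * ρ ^ 2 ≤ 0 := by
  have : 0 ≤ 16 * p * (u ^ 2 + v ^ 2) * ρ ^ 2 := by positivity
  linarith

theorem arc_lane_squared_radial_error_lyapunov_general
    (xc yc r cw p : ℝ) (hp : 0 < p)
    (x y : ℝ → ℝ)
    (hx : ∀ t, HasDerivAt x
      (r * (y t - yc) * cw
        - 4 * p * (x t - xc) * ((x t - xc)^2 + (y t - yc)^2 - r^2)) t)
    (hy : ∀ t, HasDerivAt y
      (-(r * (x t - xc) * cw)
        - 4 * p * (y t - yc) * ((x t - xc)^2 + (y t - yc)^2 - r^2)) t) :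
    Antitone (fun t => ((x t - xc)^2 + (y t - yc)^2 - r^2)^2) ∧
    ∀ t, HasDerivAt (fun s => ((x s - xc)^2 + (y s - yc)^2 - r^2)^2)
        (-16 * p * ((x t - xc)^2 + (y t - yc)^2)
          * ((x t - xc)^2 + (y t - yc)^2 - r^2)^2) t ∧
      -16 * p * ((x t - xc)^2 + (y t - yc)^2)
          * ((x t - xc)^2 + (y t - yc)^2 - r^2)^2 ≤ 0 := by
  have hderiv t := hasDerivAt_sq_radialError_of_arcField (hx t) (hy t)
  have hnonpos t := neg_mul_sum_sq_mul_sq_nonpos hp.le (x t - xc) (y t - yc)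
    (radialError xc yc r (x t) (y t))
  exact ⟨antitone_of_hasDerivAt_nonpos hderiv hnonpos, fun t => ⟨hderiv t, hnonpos t⟩⟩

/-- For any differentiable solution of the arc lane-tracking vector field with
gain `p > 0`, the squared radial error `ρ²` is nonincreasing: its derivative is
`-16 p ((x - xc)² + (y - yc)²) ρ² ≤ 0`, so `ρ²` is a Lyapunov function for
convergence to the target circle. -/
theorem arc_lane_squared_radial_error_lyapunov
    (xc yc r cw p : ℝ) (hr : 0 < r) (hcw : cw = 1 ∨ cw = -1) (hp : 0 < p)
    (x y : ℝ → ℝ)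
    (hx : ∀ t, HasDerivAt x
      (r * (y t - yc) * cw
        - 4 * p * (x t - xc) * ((x t - xc)^2 + (y t - yc)^2 - r^2)) t)
    (hy : ∀ t, HasDerivAt y
      (-(r * (x t - xc) * cw)
        - 4 * p * (y t - yc) * ((x t - xc)^2 + (y t - yc)^2 - r^2)) t) :
    Antitone (fun t => ((x t - xc)^2 + (y t - yc)^2 - r^2)^2) ∧
    ∀ t, HasDerivAt (fun s => ((x s - xc)^2 + (y s - yc)^2 - r^2)^2)
        (-16 * p * ((x t - xc)^2 + (y t - yc)^2)
          * ((x t - xc)^2 + (y t - yc)^2 - r^2)^2) t ∧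
      -16 * p * ((x t - xc)^2 + (y t - yc)^2)
          * ((x t - xc)^2 + (y t - yc)^2 - r^2)^2 ≤ 0 :=
  arc_lane_squared_radial_error_lyapunov_general xc yc r cw p hp x y hx hy
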